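/- arXiv:1404.0261 — 3 statements merged into one kernel-verified Lean document; each statement's English description precedes it below -/
import Mathlib

section
/- Let n and Δ be natural numbers with n > Δ, let δ > 0 and c₀ > 0 be real constants, and suppose Δ ≥ Δ₀ and (Δ:ℝ) ≥ n^δ, where Δ₀ is a sufficiently large constant (depending only on δ and c₀). Let S : ℕ → ℝ be a nonnegative function such that S(m) = 0 for every m ≤ Δ, and such that for every m with Δ < m ≤ n there exist natural numbers m₁, m₂ and real numbers α, β with 1/3 ≤ β ≤ α ≤ 2/3, α + β = 1, (m₁:ℝ) ≤ α·m + 2·√m, (m₂:ℝ) ≤ β·m + 2·√m, and S(m) ≤ c₀·√m·log m + S(m₁) + S(m₂). Then there exists a constant C (depending only on δ and c₀) such that S(n) ≤ C·(n/√(Δ/3) − √n)·log Δ. -/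
/-!
Put `d = √(Δ / 3)` and `Φ(m) = max (m / d - √m) 0`. Since `n ^ δ ≤ Δ`, the cost `c₀ √m log m`
is at most `c √m` with `c = c₀ log Δ / δ` for all `m ≤ n`, and strong induction gives
`S m ≤ 10 c Φ(m)`. In the inductive step both parts of a split have size at least `m / 3 ≥ d²`,
where `x ↦ x / d - √x` is nonnegative and increasing. The parts subtract
`√(αm) + √(βm) ≥ 1.15 √m` instead of `√m`, while the separator terms cost only
`4 √m / d ≤ √m / 20`; the surplus `√m / 10` pays for `c √m`.
-/

noncomputable def potential (d x : ℝ) : ℝ := max (x / d - √x) 0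

def IsBalancedSplit (m m₁ m₂ : ℕ) : Prop :=
  ∃ α β : ℝ, 1/3 ≤ β ∧ β ≤ α ∧ α ≤ 2/3 ∧ α + β = 1 ∧
    (m₁ : ℝ) ≤ α * m + 2 * √m ∧ (m₂ : ℝ) ≤ β * m + 2 * √m

section DivSubSqrt

variable {d : ℝ}

lemma div_sub_sqrt_nonpos (hd : 0 < d) {x : ℝ} (hx₀ : 0 ≤ x) (hx : √x ≤ d) :
    x / d - √x ≤ 0 := by
  rw [sub_nonpos, div_le_iff₀ hd]
  calc x = √x * √x := (Real.mul_self_sqrt hx₀).symm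
    _ ≤ √x * d := by gcongr

lemma div_sub_sqrt_nonneg (hd : 0 < d) {x : ℝ} (hx : d ≤ √x) : 0 ≤ x / d - √x := by
  have hx0 : 0 ≤ x := by
    by_contra! h
    rw [Real.sqrt_eq_zero_of_nonpos h.le] at hx
    linarith
  rw [sub_nonneg, le_div_iff₀ hd]
  calc √x * d ≤ √x * √x := by gcongr
    _ = x := Real.mul_self_sqrt hx0

/-- `x ↦ x / d - √x` increases once `√x ≥ d / 2`; this is the two-point form of that. -/
lemma div_sub_sqrt_le_div_sub_sqrt (hd : 0 < d) {a b : ℝ} (ha : 0 ≤ a) (hab : a ≤ b)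
    (h : d ≤ √a + √b) : a / d - √a ≤ b / d - √b := by
  have hsa := Real.mul_self_sqrt ha
  have hsb := Real.mul_self_sqrt (ha.trans hab)
  have hle : (√b - √a) * d ≤ (√b - √a) * (√a + √b) :=
    mul_le_mul_of_nonneg_left h (sub_nonneg.2 (Real.sqrt_le_sqrt hab))
  have : √b - √a ≤ (b - a) / d := by
    rw [le_div_iff₀ hd]
    nlinarith
  linarith [sub_div b a d]

lemma potential_nonneg (d x : ℝ) : 0 ≤ potential d x := le_max_right _ _

lemma potential_eq (hd : 0 < d) {x : ℝ} (hx : d ≤ √x) : potential d x = x / d - √x :=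
  max_eq_left (div_sub_sqrt_nonneg hd hx)

lemma potential_le_of_le_add (hd : 0 < d) {k x t : ℝ} (hk : 0 ≤ k) (hx : d ≤ √x) (ht : 0 ≤ t)
    (hkx : k ≤ x + t) : potential d k ≤ (x + t) / d - √x := by
  have hmono : (x + t) / d - √(x + t) ≤ (x + t) / d - √x := by
    have : √x ≤ √(x + t) := Real.sqrt_le_sqrt (by linarith)
    linarith
  have hnonneg : 0 ≤ (x + t) / d - √(x + t) :=
    div_sub_sqrt_nonneg hd (hx.trans (Real.sqrt_le_sqrt (by linarith)))
  refine max_le ?_ (hnonneg.trans hmono)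
  rcases le_total d (√k) with hdk | hkd
  · refine (div_sub_sqrt_le_div_sub_sqrt hd hk hkx ?_).trans hmono
    linarith [Real.sqrt_nonneg (x + t)]
  · linarith [div_sub_sqrt_nonpos hd hk hkd]

end DivSubSqrt

lemma mul_sqrt_le_sqrt_mul {α : ℝ} (hα : 1/3 ≤ α) (m : ℝ) :
    577 / 1000 * √m ≤ √(α * m) := by
  rw [Real.sqrt_mul (by linarith)]
  gcongr
  rw [Real.le_sqrt (by norm_num) (by linarith)]
  linarith

lemma split_bound_le {d m α β : ℝ} (hd : 80 ≤ d) (hα : 1/3 ≤ α) (hβ : 1/3 ≤ β)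
    (hαβ : α + β = 1) :
    ((α * m + 2 * √m) / d - √(α * m)) + ((β * m + 2 * √m) / d - √(β * m)) + √m / 10 ≤
      m / d - √m := by
  have hsα := mul_sqrt_le_sqrt_mul hα m
  have hsβ := mul_sqrt_le_sqrt_mul hβ m
  have hsep : 4 * √m / d ≤ √m / 20 := by
    rw [div_le_div_iff₀ (by linarith) (by norm_num)]
    nlinarith [Real.sqrt_nonneg m]
  have hsum : (α * m + 2 * √m) / d + (β * m + 2 * √m) / d = m / d + 4 * √m / d := by
    rw [← add_div, ← add_div]
    congr 1
    linear_combination m * hαβ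
  linarith [Real.sqrt_nonneg m]

lemma IsBalancedSplit.lt {m m₁ m₂ : ℕ} (h : IsBalancedSplit m m₁ m₂) (hm : 36 < m) :
    m₁ < m ∧ m₂ < m := by
  obtain ⟨α, β, hβ, hβα, hα, -, hm₁, hm₂⟩ := h
  have hm' : (36 : ℝ) < m := by exact_mod_cast hm
  have hsqrt : 6 < √(m : ℝ) := by
    rw [Real.lt_sqrt (by norm_num)]
    linarith
  have hsep : 2 * √(m : ℝ) < m / 3 := by
    nlinarith [Real.mul_self_sqrt (Nat.cast_nonneg (α := ℝ) m)]
  have hαm : α * m ≤ 2/3 * m := by gcongr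
  have hβm : β * m ≤ 2/3 * m := by gcongr; linarith
  constructor
  · exact_mod_cast (show (m₁ : ℝ) < m by linarith)
  · exact_mod_cast (show (m₂ : ℝ) < m by linarith)

lemma IsBalancedSplit.potential_add_le {d : ℝ} {m m₁ m₂ : ℕ} (h : IsBalancedSplit m m₁ m₂)
    (hd : 80 ≤ d) (hm : 3 * d ^ 2 ≤ m) :
    potential d m₁ + potential d m₂ + √(m : ℝ) / 10 ≤ potential d m := by
  obtain ⟨α, β, hβ, hβα, -, hαβ, hm₁, hm₂⟩ := h
  have hd0 : 0 < d := by linarith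
  have hsqrt {γ : ℝ} (hγ : 1/3 ≤ γ) : d ≤ √(γ * m) :=
    Real.le_sqrt_of_sq_le (by nlinarith [Nat.cast_nonneg (α := ℝ) m])
  have hd_m : d ≤ √(m : ℝ) := by simpa using hsqrt (γ := 1) (by norm_num)
  have h₁ := potential_le_of_le_add hd0 (Nat.cast_nonneg m₁) (hsqrt (hβ.trans hβα))
    (by positivity) hm₁
  have h₂ := potential_le_of_le_add hd0 (Nat.cast_nonneg m₂) (hsqrt hβ) (by positivity) hm₂
  rw [potential_eq hd0 hd_m]
  linarith [split_bound_le (m := m) hd (hβ.trans hβα) hβ hαβ]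

theorem le_potential_of_recurrence {S : ℕ → ℝ} {Δ n : ℕ} {d c : ℝ} (hd : 80 ≤ d)
    (hΔ : 3 * d ^ 2 ≤ Δ) (hc : 0 ≤ c) (hS₀ : ∀ m ≤ Δ, S m = 0)
    (hrec : ∀ m, Δ < m → m ≤ n →
      ∃ m₁ m₂, IsBalancedSplit m m₁ m₂ ∧ S m ≤ c * √(m : ℝ) + S m₁ + S m₂) :
    ∀ m ≤ n, S m ≤ 10 * c * potential d m := by
  intro m
  induction m using Nat.strong_induction_on with
  | _ m ih =>
    intro hmn
    rcases le_or_gt m Δ with hmΔ | hmΔ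
    · rw [hS₀ m hmΔ]
      exact mul_nonneg (by positivity) (potential_nonneg d m)
    obtain ⟨m₁, m₂, hsplit, hSm⟩ := hrec m hmΔ hmn
    have hm : 3 * d ^ 2 ≤ m := hΔ.trans (by exact_mod_cast hmΔ.le)
    have hm36 : 36 < m := by
      have : (36 : ℝ) < m := by nlinarith
      exact_mod_cast this
    obtain ⟨hm₁, hm₂⟩ := hsplit.lt hm36
    have hsplit_bound := hsplit.potential_add_le hd hm
    calc S m ≤ c * √(m : ℝ) + S m₁ + S m₂ := hSm
      _ ≤ c * √(m : ℝ) + 10 * c * potential d m₁ + 10 * c * potential d m₂ := by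
        gcongr
        · exact ih m₁ hm₁ (hm₁.le.trans hmn)
        · exact ih m₂ hm₂ (hm₂.le.trans hmn)
      _ = 10 * c * (potential d m₁ + potential d m₂ + √(m : ℝ) / 10) := by ring
      _ ≤ 10 * c * potential d m := by gcongr

/-- The abstract recurrence underlying Lemma 2: `S m` bounds the log of the
over-counting factor on sub-problems of size `m`. -/
theorem stmt_0 (δ c₀ : ℝ) (hδ : 0 < δ) (hc₀ : 0 < c₀) :
    ∃ Δ₀ : ℕ, ∃ C : ℝ, ∀ n Δ : ℕ, n > Δ → Δ ≥ Δ₀ → (Δ : ℝ) ≥ (n : ℝ) ^ δ →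
      ∀ S : ℕ → ℝ, (∀ m, 0 ≤ S m) → (∀ m, m ≤ Δ → S m = 0) →
        (∀ m, Δ < m → m ≤ n → ∃ m₁ m₂ : ℕ, ∃ α β : ℝ,
          1/3 ≤ β ∧ β ≤ α ∧ α ≤ 2/3 ∧ α + β = 1 ∧
          (m₁ : ℝ) ≤ α * m + 2 * Real.sqrt m ∧
          (m₂ : ℝ) ≤ β * m + 2 * Real.sqrt m ∧
          S m ≤ c₀ * Real.sqrt m * Real.log m + S m₁ + S m₂) →
        S n ≤ C * ((n : ℝ) / Real.sqrt ((Δ : ℝ) / 3) - Real.sqrt n) * Real.log Δ := by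
  refine ⟨19200, 10 * c₀ / δ, fun n Δ hnΔ hΔ₀ hΔn S _ hS₀ hrec ↦ ?_⟩
  set d := √((Δ : ℝ) / 3)
  have hΔ : (19200 : ℝ) ≤ Δ := by exact_mod_cast hΔ₀
  have hd_sq : 3 * d ^ 2 = Δ := by rw [Real.sq_sqrt (by positivity)]; ring
  have hd : 80 ≤ d := Real.le_sqrt_of_sq_le (by linarith)
  have hlog : ∀ m : ℕ, 0 < m → m ≤ n → Real.log m ≤ Real.log Δ / δ := fun m hm hmn ↦ by
    rw [le_div_iff₀ hδ, mul_comm, ← Real.log_rpow (by positivity)]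
    exact Real.log_le_log (by positivity) ((Real.rpow_le_rpow (by positivity)
      (by exact_mod_cast hmn) hδ.le).trans hΔn)
  have hbound := le_potential_of_recurrence (n := n) hd hd_sq.le
    (c := c₀ * Real.log Δ / δ) (by positivity) hS₀ fun m hmΔ hmn ↦ by
      obtain ⟨m₁, m₂, α, β, hβ, hβα, hα, hαβ, hm₁, hm₂, hSm⟩ := hrec m hmΔ hmn
      refine ⟨m₁, m₂, ⟨α, β, hβ, hβα, hα, hαβ, hm₁, hm₂⟩, hSm.trans ?_⟩
      grw [hlog m (by omega) hmn]
      exact le_of_eq (by ring)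
  have hd_n : d ≤ √(n : ℝ) := Real.sqrt_le_sqrt (by
    have : (Δ : ℝ) < n := by exact_mod_cast hnΔ
    linarith)
  calc S n ≤ 10 * (c₀ * Real.log Δ / δ) * potential d n := hbound n le_rfl
    _ = _ := by rw [potential_eq (by linarith) hd_n]; ring
end

section
/- Let m, Δ, α, β, m₁, m₂ be real numbers with m ≥ 0, Δ ≥ 600, α + β = 1, 0 ≤ β ≤ α ≤ 2/3, α·m ≤ m₁ ≤ α·m + 2·√m, and β·m ≤ m₂ ≤ β·m + 2·√m. Then m₁/√(Δ/3) − √m₁ + m₂/√(Δ/3) − √m₂ ≤ m/√(Δ/3) − (1 + 1/10)·√m. -/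
/-!
Since `m₁ + m₂ ≤ m + 4√m`, the linear part of the potential grows by at most `4√m / √(Δ/3)`,
while `√m₁ + √m₂ ≥ (√α + √β) √m`. On the balanced range `1/2 ≤ α ≤ 2/3` the sum `√α + √β`
is smallest at `α = 2/3`, and `√(2/3) + √(1/3) ≈ 1.394` beats `1 + 1/10 + 4/√200 ≈ 1.383`.
-/

open Real

theorem div_sub_sqrt_add_div_sub_sqrt_le {s m α β m₁ m₂ r : ℝ} (hs : 0 ≤ s)
    (hα : 0 ≤ α) (hβ : 0 ≤ β) (hsum : α + β = 1)
    (hm₁l : α * m ≤ m₁) (hm₁u : m₁ ≤ α * m + r)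
    (hm₂l : β * m ≤ m₂) (hm₂u : m₂ ≤ β * m + r) :
    m₁ / s - √m₁ + m₂ / s - √m₂ ≤ m / s + 2 * r / s - (√α + √β) * √m := by
  have hlin : (m₁ + m₂) / s ≤ (m + 2 * r) / s :=
    div_le_div_of_nonneg_right (by linear_combination hm₁u + hm₂u + m * hsum) hs
  have hsqrt₁ : √α * √m ≤ √m₁ := sqrt_mul hα m ▸ sqrt_le_sqrt hm₁l
  have hsqrt₂ : √β * √m ≤ √m₂ := sqrt_mul hβ m ▸ sqrt_le_sqrt hm₂l
  rw [add_div, add_div] at hlin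
  linarith

theorem sqrt_add_sqrt_one_sub_le {α β a : ℝ} (hsum : α + β = 1) (hβα : β ≤ α) (hαa : α ≤ a)
    (ha : a ≤ 1) : √a + √(1 - a) ≤ √α + √β := by
  have hβ : 0 ≤ β := by linarith
  have hprod : a * (1 - a) ≤ α * β := by nlinarith
  have hsqrt_prod : √a * √(1 - a) ≤ √α * √β := by
    rw [← sqrt_mul (by linarith), ← sqrt_mul (by linarith)]
    exact sqrt_le_sqrt hprod
  rw [← pow_le_pow_iff_left₀ (by positivity) (by positivity) two_ne_zero]
  have hsq_a := sq_sqrt (by linarith : 0 ≤ a)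
  have hsq_a' := sq_sqrt (by linarith : 0 ≤ 1 - a)
  have hsq_α := sq_sqrt (by linarith : 0 ≤ α)
  have hsq_β := sq_sqrt hβ
  nlinarith

theorem one_add_one_tenth_add_four_div_sqrt_lt {Δ : ℝ} (hΔ : 600 ≤ Δ) :
    1 + 1 / 10 + 4 / √(Δ / 3) < √(2 / 3) + √(1 / 3) := by
  have hs : 14 ≤ √(Δ / 3) := (le_sqrt (by norm_num) (by linarith)).2 (by linarith)
  have hdiv : 4 / √(Δ / 3) ≤ 2 / 7 := by
    rw [div_le_div_iff₀ (by linarith) (by norm_num)]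
    linarith
  have h₁ : (816 : ℝ) / 1000 ≤ √(2 / 3) := (le_sqrt (by norm_num) (by norm_num)).2 (by norm_num)
  have h₂ : (577 : ℝ) / 1000 ≤ √(1 / 3) := (le_sqrt (by norm_num) (by norm_num)).2 (by norm_num)
  linarith

theorem stmt_2_general (m Δ α β m₁ m₂ : ℝ) (hΔ : 600 ≤ Δ)
    (hsum : α + β = 1) (hβα : β ≤ α) (hα : α ≤ 2/3)
    (hm₁l : α * m ≤ m₁) (hm₁u : m₁ ≤ α * m + 2 * Real.sqrt m)
    (hm₂l : β * m ≤ m₂) (hm₂u : m₂ ≤ β * m + 2 * Real.sqrt m) :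
    m₁ / Real.sqrt (Δ / 3) - Real.sqrt m₁ + m₂ / Real.sqrt (Δ / 3) - Real.sqrt m₂ ≤
      m / Real.sqrt (Δ / 3) - (1 + 1/10) * Real.sqrt m := by
  have hbalanced : √(2 / 3) + √(1 / 3) ≤ √α + √β := by
    simpa [show (1 : ℝ) - 2 / 3 = 1 / 3 by norm_num] using
      sqrt_add_sqrt_one_sub_le hsum hβα hα (by norm_num)
  have hgain : (1 + 1 / 10) * √m ≤ (√α + √β - 4 / √(Δ / 3)) * √m :=
    mul_le_mul_of_nonneg_right
      (by linarith [one_add_one_tenth_add_four_div_sqrt_lt hΔ]) (sqrt_nonneg m)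
  have hsplit := div_sub_sqrt_add_div_sub_sqrt_le (sqrt_nonneg (Δ / 3)) (by linarith)
    (by linarith) hsum hm₁l hm₁u hm₂l hm₂u
  have hrewrite : 2 * (2 * √m) / √(Δ / 3) = 4 / √(Δ / 3) * √m := by ring
  linarith

/-- Equation (2) in the proof of Lemma 2, with the explicit choice ε' = 1/10. -/
theorem stmt_2 (m Δ α β m₁ m₂ : ℝ) (hm : 0 ≤ m) (hΔ : 600 ≤ Δ)
    (hsum : α + β = 1) (hβ0 : 0 ≤ β) (hβα : β ≤ α) (hα : α ≤ 2/3)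
    (hm₁l : α * m ≤ m₁) (hm₁u : m₁ ≤ α * m + 2 * Real.sqrt m)
    (hm₂l : β * m ≤ m₂) (hm₂u : m₂ ≤ β * m + 2 * Real.sqrt m) :
    m₁ / Real.sqrt (Δ / 3) - Real.sqrt m₁ + m₂ / Real.sqrt (Δ / 3) - Real.sqrt m₂ ≤
      m / Real.sqrt (Δ / 3) - (1 + 1/10) * Real.sqrt m :=
  stmt_2_general m Δ α β m₁ m₂ hΔ hsum hβα hα hm₁l hm₁u hm₂l hm₂u
end

section
/- There exists a universal constant C > 0 with the following property. Let c ≥ 1 be a real number, let n and Δ be natural numbers with Δ ≥ 37, and let f : ℕ → ℝ be a function such that f(m) ≤ c·Δ for every m ≤ Δ, and such that for every m with Δ < m ≤ n there exists a natural number m' with (m':ℝ) ≤ 2·m/3 + 2·√m and f(m) ≤ f(m') + c·√m·log m. Then f(n) ≤ C·c·(√n·log n + Δ). -/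
/-!
Write `g m = √m · log m`. Once `m ≥ 37`, the size bound `m' ≤ 2m/3 + 2√m` forces
`m' ≤ (999/1000)² m`, hence `m' < m` and `g m' ≤ (999/1000) g m`. Along the recursion the
costs `c · g m` therefore shrink geometrically, and strong induction shows
`f m ≤ 1000 c · g m + c Δ`.
-/

open Real

theorem le_of_contracting_recurrence {f g : ℕ → ℝ} {Δ n : ℕ} {q c K B : ℝ}
    (hg : ∀ m, 0 ≤ g m) (hK : 0 ≤ K) (hqK : q * K + c ≤ K)
    (hbase : ∀ m ≤ Δ, f m ≤ B)
    (hstep : ∀ m, Δ < m → m ≤ n → ∃ m' < m, g m' ≤ q * g m ∧ f m ≤ f m' + c * g m) :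
    f n ≤ K * g n + B := by
  induction n using Nat.strong_induction_on with
  | _ n ih =>
    rcases le_or_gt n Δ with hnΔ | hΔn
    · linarith [hbase n hnΔ, mul_nonneg hK (hg n)]
    · obtain ⟨m', hm'n, hgm', hfm⟩ := hstep n hΔn le_rfl
      have ih' : f m' ≤ K * g m' + B :=
        ih m' hm'n fun m hΔm hmm' => hstep m hΔm (hm'n.le.trans' hmm')
      calc f n ≤ K * g m' + B + c * g n := by linarith
        _ ≤ K * (q * g n) + B + c * g n := by gcongr
        _ = (q * K + c) * g n + B := by ring
        _ ≤ K * g n + B := by gcongr; exact hg n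

theorem sqrt_mul_log_le_of_le_sq_mul {x x' θ : ℝ} (hx : 1 ≤ x) (hx' : 0 ≤ x')
    (hθ : 0 ≤ θ) (hθ1 : θ ≤ 1) (hle : x' ≤ θ ^ 2 * x) :
    √x' * log x' ≤ θ * (√x * log x) := by
  have hrhs : 0 ≤ θ * (√x * log x) := by
    have := log_nonneg hx
    positivity
  rcases le_or_gt x' 1 with hx'1 | hx'1
  · exact (mul_nonpos_of_nonneg_of_nonpos (sqrt_nonneg _) (log_nonpos hx' hx'1)).trans hrhs
  · have hx'x : x' ≤ x := hle.trans (mul_le_of_le_one_left (by linarith) (pow_le_one₀ hθ hθ1))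
    have hsqrt : √x' ≤ θ * √x := by
      calc √x' ≤ √(θ ^ 2 * x) := sqrt_le_sqrt hle
        _ = θ * √x := by rw [sqrt_mul (sq_nonneg θ), sqrt_sq hθ]
    calc √x' * log x' ≤ (θ * √x) * log x :=
          mul_le_mul hsqrt (log_le_log (by linarith) hx'x) (log_nonneg hx'1.le) (by positivity)
      _ = θ * (√x * log x) := by ring

theorem two_thirds_add_two_sqrt_le {x : ℝ} (hx : 37 ≤ x) :
    2 * x / 3 + 2 * √x ≤ (999 / 1000) ^ 2 * x := by
  have hsq : √x * √x = x := mul_self_sqrt (by linarith)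
  have hs : 6.08 ≤ √x := by nlinarith [sqrt_nonneg x]
  nlinarith

/-- The running-time recurrence: `f m` stands for the log of the running time on a
sub-problem of size `m`. -/
theorem stmt_4 :
    ∃ C : ℝ, 0 < C ∧ ∀ c : ℝ, 1 ≤ c → ∀ n Δ : ℕ, 37 ≤ Δ →
      ∀ f : ℕ → ℝ, (∀ m, m ≤ Δ → f m ≤ c * Δ) →
        (∀ m, Δ < m → m ≤ n → ∃ m' : ℕ,
          (m' : ℝ) ≤ 2 * m / 3 + 2 * Real.sqrt m ∧
          f m ≤ f m' + c * Real.sqrt m * Real.log m) →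
        f n ≤ C * c * (Real.sqrt n * Real.log n + Δ) := by
  refine ⟨1000, by norm_num, fun c hc n Δ hΔ f hbase hrec => ?_⟩
  have hg : ∀ m : ℕ, 0 ≤ √(m : ℝ) * log m := fun m =>
    mul_nonneg (sqrt_nonneg _) (log_natCast_nonneg m)
  have hstep : ∀ m, Δ < m → m ≤ n → ∃ m' < m,
      √(m' : ℝ) * log m' ≤ 999 / 1000 * (√(m : ℝ) * log m) ∧
      f m ≤ f m' + c * (√(m : ℝ) * log m) := by
    intro m hΔm hmn
    obtain ⟨m', hm', hfm⟩ := hrec m hΔm hmn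
    have hm : (37 : ℝ) ≤ m := by exact_mod_cast hΔ.trans hΔm.le
    have hshrink : (m' : ℝ) ≤ (999 / 1000) ^ 2 * m := hm'.trans (two_thirds_add_two_sqrt_le hm)
    have hm'm : m' < m := by
      have : (m' : ℝ) < m := by linarith
      exact_mod_cast this
    exact ⟨m', hm'm, sqrt_mul_log_le_of_le_sq_mul (by linarith) m'.cast_nonneg
      (by norm_num) (by norm_num) hshrink, by linarith⟩
  have hc0 : 0 ≤ c := by linarith
  have hΔ0 : (0 : ℝ) ≤ Δ := Δ.cast_nonneg
  have := le_of_contracting_recurrence hg (by positivity : 0 ≤ 1000 * c)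
    (by linarith) hbase hstep
  nlinarith [mul_nonneg hc0 hΔ0]
end
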